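/- For any finite set of constants C and any arity n, the number of equivalence classes of n-tuples of terms (over constants from C, variables, and nulls) under the position-comparability relation ∼ is finite. -/

import Mathlib

namespace Paper

/-- Terms: constants, variables, labeled nulls. -/
inductive Term (C : Type) where
  | const : C → Term C
  | var   : ℕ → Term C
  | null  : ℕ → Term C
deriving DecidableEq

variable {C : Type}

/-- Relational atoms. -/
structure Atom (C : Type) where
  pred : ℕ
  args : List (Term C)

/-- Substitutions on variables. -/
abbrev Subst (C : Type) := ℕ → Term C

def Term.apply (θ : Subst C) : Term C → Term C
  | .const c => .const c
  | .var v   => θ v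
  | .null n  => .null n

def Atom.apply (θ : Subst C) (a : Atom C) : Atom C :=
  ⟨a.pred, a.args.map (Term.apply θ)⟩

def Term.varsF : Term C → Finset ℕ
  | .var v => {v}
  | _ => ∅

def Term.nullsF : Term C → Finset ℕ
  | .null n => {n}
  | _ => ∅

def Atom.varsF (a : Atom C) : Finset ℕ := a.args.foldr (fun t s => t.varsF ∪ s) ∅
def Atom.nullsF (a : Atom C) : Finset ℕ := a.args.foldr (fun t s => t.nullsF ∪ s) ∅

def atomsVars (l : List (Atom C)) : Finset ℕ := l.foldr (fun a s => a.varsF ∪ s) ∅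
def atomsNulls (l : List (Atom C)) : Finset ℕ := l.foldr (fun a s => a.nullsF ∪ s) ∅

/-- A single-head TGD (existential rule) `body → ∃Z head`, where the
existential variables are exactly the head variables not in the body. -/
structure TGD (C : Type) where
  body : List (Atom C)
  head : Atom C

def TGD.varsF (σ : TGD C) : Finset ℕ := atomsVars (σ.head :: σ.body)
def TGD.nullsF (σ : TGD C) : Finset ℕ := atomsNulls (σ.head :: σ.body)
def TGD.exVars (σ : TGD C) : Finset ℕ := σ.head.varsF \ atomsVars σ.body
def TGD.varsList (σ : TGD C) : List ℕ := σ.varsF.sort (· ≤ ·)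

def TGD.applyS (θ : Subst C) (σ : TGD C) : TGD C :=
  ⟨σ.body.map (Atom.apply θ), σ.head.apply θ⟩

/-- Type comparability of two terms. -/
def TypeComp (t t' : Term C) : Prop :=
  (∀ c, t = Term.const c ↔ t' = Term.const c) ∧
  ((∃ v, t = Term.var v) ↔ (∃ v, t' = Term.var v)) ∧
  ((∃ m, t = Term.null m) ↔ (∃ m, t' = Term.null m))

/-- Position comparability of two lists of terms. -/
def PosComp (l l' : List (Term C)) : Prop :=
  l.length = l'.length ∧
  (∀ i (hi : i < l.length) (hi' : i < l'.length),
      TypeComp (l.get ⟨i, hi⟩) (l'.get ⟨i, hi'⟩)) ∧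
  (∀ i j (hi : i < l.length) (hj : j < l.length) (hi' : i < l'.length) (hj' : j < l'.length),
      l.get ⟨i, hi⟩ = l.get ⟨j, hj⟩ ↔ l'.get ⟨i, hi'⟩ = l'.get ⟨j, hj'⟩) ∧
  (∀ t, t ∈ l → t ∈ l' →
    ∀ i (hi : i < l.length) (hi' : i < l'.length),
      (l.get ⟨i, hi⟩ = t ↔ l'.get ⟨i, hi'⟩ = t))

/-- One element of a derivation path: an atom together with an
instantiated rule `ρ = σθ`, recorded as the rule and the substitution. -/
structure Step (C : Type) where
  atom : Atom C
  rule : TGD C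
  θ : Subst C

def Step.inst (s : Step C) : TGD C := s.rule.applyS s.θ

/-- The nulls introduced at this step by eliminating existential variables. -/
def Step.freshNulls (s : Step C) : Finset ℕ :=
  s.rule.exVars.biUnion (fun v => (s.θ v).nullsF)

/-- Comparability of two derivation-path elements: same rule of `Sg`, and the
tuples of substituted terms are position comparable. -/
def PairComp (s s' : Step C) : Prop :=
  s.rule = s'.rule ∧ PosComp (s.rule.varsList.map s.θ) (s'.rule.varsList.map s'.θ)

/-- Derivation path of `Sg` (Definition 3 of the paper). -/
def IsDerivationPath (Sg : Set (TGD C)) (P : List (Step C)) : Prop :=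
  (∀ s ∈ P, s.rule ∈ Sg ∧ s.atom = s.rule.head.apply s.θ) ∧
  (∀ i (hi : i + 1 < P.length),
      (P.get ⟨i+1, hi⟩).atom ∈ (P.get ⟨i, Nat.lt_of_succ_lt hi⟩).inst.body) ∧
  (∀ i j (hi : i < P.length) (hj : j < P.length), i < j →
      ∀ m ∈ (P.get ⟨i, hi⟩).freshNulls, m ∉ (P.get ⟨j, hj⟩).inst.nullsF)

/-- Comparability of derivation paths. -/
def PathComp (P Q : List (Step C)) : Prop :=
  P.length = Q.length ∧
  ∀ i (hi : i < P.length) (hi' : i < Q.length), PairComp (P.get ⟨i, hi⟩) (Q.get ⟨i, hi'⟩)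

/-- Loop pattern: first and last elements comparable, no other pair comparable. -/
def IsLoopPattern (Sg : Set (TGD C)) (P : List (Step C)) : Prop :=
  IsDerivationPath Sg P ∧ 2 ≤ P.length ∧
  (∀ (h0 : 0 < P.length) (hl : P.length - 1 < P.length),
      PairComp (P.get ⟨0, h0⟩) (P.get ⟨P.length - 1, hl⟩)) ∧
  (∀ i j (hi : i < P.length) (hj : j < P.length), i < j → ¬(i = 0 ∧ j = P.length - 1) →
      ¬ PairComp (P.get ⟨i, hi⟩) (P.get ⟨j, hj⟩))

/-- The intersection `⋂_j var(α_j)` of head-atom variables along a path. -/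
def interVars (P : List (Step C)) : Set ℕ := {v | ∀ s ∈ P, v ∈ s.atom.varsF}

/-- The loop-restricted splitting condition of Definition 8. -/
def LRcond (P : List (Step C)) : Prop :=
  ∀ i (hi : i + 1 < P.length),
    ∃ Bh Bb : List (Atom C),
      (∀ a, a ∈ (P.get ⟨i, Nat.lt_of_succ_lt hi⟩).inst.body ↔ (a ∈ Bh ∨ a ∈ Bb)) ∧
      (∀ a, ¬(a ∈ Bh ∧ a ∈ Bb)) ∧
      (P.get ⟨i+1, hi⟩).atom ∈ Bb ∧
      ((((P.get ⟨i, Nat.lt_of_succ_lt hi⟩).atom.varsF ∪ atomsVars Bh) ∩ atomsVars Bb : Finset ℕ) : Set ℕ)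
        = interVars P

/-- Loop restricted (LR) sets of TGDs. -/
def LoopRestricted (Sg : Set (TGD C)) : Prop :=
  ∀ P, IsLoopPattern Sg P → LRcond P

/-- Homomorphisms: identity on constants, nulls map to constants or nulls. -/
def IsHom (h : Term C → Term C) : Prop :=
  (∀ c, h (Term.const c) = Term.const c) ∧
  (∀ m, (∃ c, h (Term.null m) = Term.const c) ∨ (∃ m', h (Term.null m) = Term.null m'))

def Atom.mapTerms (h : Term C → Term C) (a : Atom C) : Atom C := ⟨a.pred, a.args.map h⟩

def IsDatabase (D : Set (Atom C)) : Prop :=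
  D.Finite ∧ ∀ a ∈ D, ∀ t ∈ a.args, ∃ c, t = Term.const c

/-- A Boolean conjunctive query (all variables existentially quantified). -/
structure BCQ (C : Type) where
  atoms : List (Atom C)

def SatBCQ (I : Set (Atom C)) (q : BCQ C) : Prop :=
  ∃ h, IsHom h ∧ ∀ a ∈ q.atoms, a.mapTerms h ∈ I

def SatTGD (I : Set (Atom C)) (σ : TGD C) : Prop :=
  ∀ h, IsHom h → (∀ a ∈ σ.body, a.mapTerms h ∈ I) →
    ∃ h', IsHom h' ∧ (∀ v ∈ atomsVars σ.body, h' (Term.var v) = h (Term.var v)) ∧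
      σ.head.mapTerms h' ∈ I

/-- Certain-answer entailment `D ∪ Sg ⊨ q`. -/
def Entails (D : Set (Atom C)) (Sg : Set (TGD C)) (q : BCQ C) : Prop :=
  ∀ I : Set (Atom C), D ⊆ I → (∀ σ ∈ Sg, SatTGD I σ) → SatBCQ I q

/-- Chase sequences of a given length (oblivious chase). -/
inductive ChaseSeq (D : Set (Atom C)) (Sg : Set (TGD C)) : ℕ → Set (Atom C) → Prop where
  | zero : ChaseSeq D Sg 0 D
  | succ {n : ℕ} {I : Set (Atom C)} (σ : TGD C) (θ : Subst C) :
      ChaseSeq D Sg n I → σ ∈ Sg →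
      (∀ a ∈ σ.body, a.apply θ ∈ I) →
      (∀ v ∈ σ.exVars, ∃ m, θ v = Term.null m ∧ ∀ a ∈ I, Term.null m ∉ a.args) →
      ChaseSeq D Sg (n+1) (insert (σ.head.apply θ) I)

/-- Atoms of chase level at most `k` (the level-based chase `chase^k`). -/
inductive ChaseLevel (D : Set (Atom C)) (Sg : Set (TGD C)) : ℕ → Atom C → Prop where
  | base {a : Atom C} : a ∈ D → ChaseLevel D Sg 0 a
  | mono {k : ℕ} {a : Atom C} : ChaseLevel D Sg k a → ChaseLevel D Sg (k+1) a
  | step {k : ℕ} (σ : TGD C) (θ : Subst C) : σ ∈ Sg →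
      (∀ a ∈ σ.body, ChaseLevel D Sg k (a.apply θ)) →
      ChaseLevel D Sg (k+1) (σ.head.apply θ)

def ChaseLevelEntails (D : Set (Atom C)) (Sg : Set (TGD C)) (k : ℕ) (q : BCQ C) : Prop :=
  ∃ h, IsHom h ∧ ∀ a ∈ q.atoms, ChaseLevel D Sg k (a.mapTerms h)

def Derivable (D : Set (Atom C)) (Sg : Set (TGD C)) (a : Atom C) : Prop :=
  ∃ N I, ChaseSeq D Sg N I ∧ a ∈ I

/-- Bounded derivation-depth property of a class of TGD sets. -/
def BDDP (Cl : Set (Set (TGD C))) : Prop :=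
  ∀ Sg ∈ Cl, ∀ q : BCQ C, ∃ k, ∀ D : Set (Atom C),
    IsDatabase D → Entails D Sg q → ChaseLevelEntails D Sg k q

def BDDPof (Sg : Set (TGD C)) : Prop :=
  ∀ q : BCQ C, ∃ k, ∀ D : Set (Atom C),
    IsDatabase D → Entails D Sg q → ChaseLevelEntails D Sg k q

/-- (Instantiated or symbolic) derivation trees. -/
inductive ITree (C : Type) where
  | leaf : Atom C → ITree C
  | node : Atom C → TGD C → Subst C → List (ITree C) → ITree C

def ITree.rootAtom : ITree C → Atom C
  | .leaf a => a
  | .node a _ _ _ => a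

def ITree.label : ITree C → (Atom C ⊕ (Atom C × TGD C × Subst C))
  | .leaf a => .inl a
  | .node a σ θ _ => .inr (a, σ, θ)

def ITree.depth : ITree C → ℕ
  | .leaf _ => 1
  | .node _ _ _ cs => 1 + (cs.attach.map (fun t => ITree.depth t.1)).foldr max 0
decreasing_by simp_wf; have := List.sizeOf_lt_of_mem t.2; omega

def ITree.numNodes : ITree C → ℕ
  | .leaf _ => 1
  | .node _ _ _ cs => 1 + (cs.attach.map (fun t => ITree.numNodes t.1)).sum
decreasing_by simp_wf; have := List.sizeOf_lt_of_mem t.2; omega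

def ITree.numLeaves : ITree C → ℕ
  | .leaf _ => 1
  | .node _ _ _ cs => (cs.attach.map (fun t => ITree.numLeaves t.1)).sum
decreasing_by simp_wf; have := List.sizeOf_lt_of_mem t.2; omega

def ITree.subtrees : ITree C → List (ITree C)
  | .leaf a => [.leaf a]
  | .node a σ θ cs => .node a σ θ cs :: (cs.attach.map (fun t => ITree.subtrees t.1)).flatten
decreasing_by simp_wf; have := List.sizeOf_lt_of_mem t.2; omega

/-- Instantiated derivation trees on a database `D` (Definition 7). -/
inductive IsInstTree (D : Set (Atom C)) (Sg : Set (TGD C)) : ITree C → Prop where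
  | leaf {a : Atom C} : a ∈ D → IsInstTree D Sg (.leaf a)
  | node {a : Atom C} {σ : TGD C} {θ : Subst C} {cs : List (ITree C)} :
      σ ∈ Sg → a = σ.head.apply θ →
      List.Forall₂ (fun (b : Atom C) (t : ITree C) => t.rootAtom = b.apply θ) σ.body cs →
      (∀ t ∈ cs, IsInstTree D Sg t) →
      a.varsF = ∅ →
      IsInstTree D Sg (.node a σ θ cs)

/-- Symbolic derivation trees of `Sg` (Definition 6). -/
inductive IsDerivTree (Sg : Set (TGD C)) : ITree C → Prop where
  | leafnode {a : Atom C} {σ : TGD C} {θ : Subst C} :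
      σ ∈ Sg → a = σ.head.apply θ →
      (∀ b ∈ σ.body, (Atom.apply θ b).nullsF = ∅) →
      IsDerivTree Sg (.node a σ θ [])
  | node {a : Atom C} {σ : TGD C} {θ : Subst C} {cs : List (ITree C)} :
      σ ∈ Sg → a = σ.head.apply θ → cs ≠ [] →
      List.Forall₂ (fun (b : Atom C) (t : ITree C) => t.rootAtom = b.apply θ) σ.body cs →
      (∀ t ∈ cs, IsDerivTree Sg t) →
      IsDerivTree Sg (.node a σ θ cs)

/-- A tree supports an atom if the root atom is a homomorphic image of it. -/
def Supports (T : ITree C) (a : Atom C) : Prop :=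
  ∃ h, IsHom h ∧ a.mapTerms h = T.rootAtom

def compSubst (τ : Term C → Term C) (θ : Subst C) : Subst C := fun v => τ (θ v)

/-- `InstOf T T'`: `T'` is obtained from the symbolic tree `T` by applying
further substitutions nodewise and expanding symbolic leaves by database-atom
leaves (Definition 7). -/
inductive InstOf : ITree C → ITree C → Prop where
  | leafExpand {a : Atom C} {σ : TGD C} {θ : Subst C} (τ : Term C → Term C) :
      InstOf (.node a σ θ [])
        (.node (σ.head.apply (compSubst τ θ)) σ (compSubst τ θ)
          (σ.body.map (fun b => ITree.leaf (b.apply (compSubst τ θ)))))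
  | node {a : Atom C} {σ : TGD C} {θ : Subst C} {cs cs' : List (ITree C)}
      (τ : Term C → Term C) : cs ≠ [] →
      List.Forall₂ InstOf cs cs' →
      InstOf (.node a σ θ cs) (.node (σ.head.apply (compSubst τ θ)) σ (compSubst τ θ) cs')

def AtomicEntails (D : Set (Atom C)) (Sg : Set (TGD C)) (p : ℕ) (z : List ℕ) : Prop :=
  Entails D Sg ⟨[⟨p, z.map Term.var⟩]⟩

/-- BDTDP with a concrete tree-depth bound `k`. -/
def BDTDPbound (Sg : Set (TGD C)) (k : ℕ) : Prop :=
  ∀ (p : ℕ) (z : List ℕ) (D : Set (Atom C)), IsDatabase D →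
    (AtomicEntails D Sg p z ↔
      ∃ (T : ITree C) (n : List (Term C)),
        IsInstTree D Sg T ∧ T.depth ≤ k ∧ Supports T ⟨p, n⟩ ∧
        ∃ h, IsHom h ∧ (z.map Term.var).map h = n)

def BDTDPof (Sg : Set (TGD C)) : Prop := ∃ k, BDTDPbound Sg k

/-- Bounded derivation tree depth property of a class of TGD sets. -/
def BDTDP (Cl : Set (Set (TGD C))) : Prop := ∀ Sg ∈ Cl, BDTDPof Sg

/-- The five loop pattern types of generalised loop restriction. -/
def TypeI (P : List (Step C)) : Prop := LRcond P

def TypeII (P : List (Step C)) : Prop :=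
  ∃ (i : ℕ) (hi : i + 1 < P.length),
    ∃ Bh Bb : List (Atom C),
      (∀ a, a ∈ (P.get ⟨i, Nat.lt_of_succ_lt hi⟩).inst.body ↔ (a ∈ Bh ∨ a ∈ Bb)) ∧
      (∀ a, ¬(a ∈ Bh ∧ a ∈ Bb)) ∧
      (P.get ⟨i+1, hi⟩).atom ∈ Bb ∧
      ((P.get ⟨i, Nat.lt_of_succ_lt hi⟩).atom.varsF ∪ atomsVars Bh) ∩ atomsVars Bb = ∅

def TypeIII (P : List (Step C)) : Prop :=
  ∀ i (hi : i + 1 < P.length), ∀ β ∈ (P.get ⟨i, Nat.lt_of_succ_lt hi⟩).inst.body,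
    (P.get ⟨i, Nat.lt_of_succ_lt hi⟩).inst.varsF ⊆ β.varsF

def TypeIV (P : List (Step C)) : Prop :=
  ∀ i (hi : i + 1 < P.length), ∀ β ∈ (P.get ⟨i, Nat.lt_of_succ_lt hi⟩).inst.body,
    β ≠ (P.get ⟨i+1, hi⟩).atom →
    ((P.get ⟨i+1, hi⟩).atom.varsF ∩ β.varsF).Nonempty →
    ∀ v ∈ (P.get ⟨i+1, hi⟩).atom.varsF ∩ β.varsF,
      ∀ j (hj : j < P.length), j ≤ i → v ∈ (P.get ⟨j, hj⟩).atom.varsF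

def TypeV (P : List (Step C)) : Prop :=
  ∃ (i : ℕ) (hi : i + 1 < P.length),
    ∃ Bh Bb : List (Atom C),
      (∀ a, a ∈ (P.get ⟨i, Nat.lt_of_succ_lt hi⟩).inst.body ↔ (a ∈ Bh ∨ a ∈ Bb)) ∧
      (∀ a, ¬(a ∈ Bh ∧ a ∈ Bb)) ∧
      (∀ j (hj : j < P.length), i + 1 ≤ j → (P.get ⟨j, hj⟩).atom ∉ Bh) ∧
      atomsNulls Bh ≠ ∅

/-- Generalised loop restricted (GLR) sets of TGDs. -/
def GLR (Sg : Set (TGD C)) : Prop :=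
  ∀ P, IsLoopPattern Sg P → TypeI P ∨ TypeII P ∨ TypeIII P ∨ TypeIV P ∨ TypeV P

/-- `N` bounds ∼-distinct derivation paths of `Sg`. -/
def PathBound (Sg : Set (TGD C)) (N : ℕ) : Prop :=
  ∀ P : List (Step C), IsDerivationPath Sg P → N < P.length →
    ∃ (i j : ℕ) (hi : i < P.length) (hj : j < P.length), i < j ∧
      PairComp (P.get ⟨i, hi⟩) (P.get ⟨j, hj⟩)


/-- Position comparability of two `n`-tuples of terms. -/
def PosCompF {n : ℕ} (t t' : Fin n → Term C) : Prop :=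
  (∀ i, TypeComp (t i) (t' i)) ∧
  (∀ i j, t i = t j ↔ t' i = t' j) ∧
  (∀ s : Term C, (∃ i, t i = s) → (∃ j, t' j = s) → ∀ i, (t i = s ↔ t' i = s))

/-! Rename the (at most `n`) variable and null names occurring in a tuple injectively into
fresh names below `2 * n`. The renamed tuple has the same types and the same equality pattern,
and since its names are fresh, the only terms it shares with the original are constants, which
sit at the same positions. As `C` is finite, there are finitely many tuples over these names. -/

def Term.names : Term C → Finset ℕ
  | .const _ => ∅
  | .var v => {v}
  | .null m => {m}

def Term.rename (f : ℕ → ℕ) : Term C → Term C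
  | .const c => .const c
  | .var v => .var (f v)
  | .null m => .null (f m)

theorem Term.card_names_le_one (t : Term C) : t.names.card ≤ 1 := by
  cases t <;> simp [Term.names]

theorem Term.typeComp_rename (f : ℕ → ℕ) (t : Term C) : TypeComp t (t.rename f) := by
  cases t <;> simp [TypeComp, Term.rename]

theorem Term.rename_injOn {f : ℕ → ℕ} {A : Set ℕ} (hf : Set.InjOn f A) :
    Set.InjOn (Term.rename (C := C) f) {t | ↑t.names ⊆ A} := by
  rintro (c | v | m) ht (c' | v' | m') hu h <;>
    simp_all [Term.rename, Term.names, hf.eq_iff]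

theorem Term.eq_const_of_rename_eq {f : ℕ → ℕ} {A : Set ℕ} (hf : Set.MapsTo f A Aᶜ)
    {t u : Term C} (ht : ↑t.names ⊆ A) (hu : ↑u.names ⊆ A) (h : u.rename f = t) :
    ∃ c, t = .const c := by
  rcases u with c | v | m <;> subst h
  · exact ⟨c, rfl⟩
  all_goals simp only [Term.rename, Term.names, Finset.coe_singleton, Set.singleton_subset_iff] at ht hu
  all_goals exact absurd ht (hf hu)

theorem exists_injOn_mapsTo_range_sdiff (A : Finset ℕ) :
    ∃ f : ℕ → ℕ, Set.InjOn f A ∧ Set.MapsTo f A ↑(Finset.range (2 * A.card) \ A) := by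
  have hcard : A.card ≤ (Finset.range (2 * A.card) \ A).card := by
    have := Finset.le_card_sdiff A (Finset.range (2 * A.card))
    rw [Finset.card_range] at this
    omega
  obtain ⟨f, hmaps, hinj⟩ := A.finite_toSet.exists_injOn_of_encard_le
    (t := ((Finset.range (2 * A.card) \ A : Finset ℕ) : Set ℕ))
    (by simpa only [Set.encard_coe_eq_coe_finsetCard, Nat.cast_le])
  exact ⟨f, hinj, hmaps⟩

section Tuple

variable {n : ℕ}

def tupleNames (t : Fin n → Term C) : Finset ℕ := Finset.univ.biUnion fun i => (t i).names

theorem card_tupleNames_le (t : Fin n → Term C) : (tupleNames t).card ≤ n :=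
  calc (tupleNames t).card ≤ ∑ i, (t i).names.card := Finset.card_biUnion_le
    _ ≤ ∑ _ : Fin n, 1 := Finset.sum_le_sum fun i _ => (t i).card_names_le_one
    _ = n := by simp

theorem names_subset_tupleNames (t : Fin n → Term C) (i : Fin n) :
    ↑(t i).names ⊆ (↑(tupleNames t) : Set ℕ) := by
  intro v hv
  simp only [tupleNames, Finset.coe_biUnion, Set.mem_iUnion]
  exact ⟨i, Finset.mem_coe.mpr (Finset.mem_univ i), hv⟩

theorem posCompF_rename {t : Fin n → Term C} {f : ℕ → ℕ} (hinj : Set.InjOn f ↑(tupleNames t))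
    (hfresh : Set.MapsTo f ↑(tupleNames t) (↑(tupleNames t))ᶜ) :
    PosCompF t (Term.rename f ∘ t) := by
  have hnames := names_subset_tupleNames t
  refine ⟨fun i => (t i).typeComp_rename f, fun i j => ?_, ?_⟩
  · exact ((Term.rename_injOn hinj).eq_iff (hnames i) (hnames j)).symm
  · rintro s ⟨i₀, rfl⟩ ⟨j₀, hj₀⟩ i
    obtain ⟨c, hc⟩ := Term.eq_const_of_rename_eq hfresh (hnames i₀) (hnames j₀) hj₀
    rw [hc]
    exact ((t i).typeComp_rename f).1 c

end Tuple

def boundedTerms [Fintype C] [DecidableEq C] (k : ℕ) : Finset (Term C) :=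
  Finset.univ.image .const ∪ (Finset.range k).image .var ∪ (Finset.range k).image .null

theorem Term.rename_mem_boundedTerms [Fintype C] [DecidableEq C] {f : ℕ → ℕ} {A : Set ℕ}
    {k : ℕ} {t : Term C} (ht : ↑t.names ⊆ A) (hf : Set.MapsTo f A ↑(Finset.range k)) :
    t.rename f ∈ boundedTerms k := by
  cases t <;> simp_all [boundedTerms, Term.names, Term.rename, Set.MapsTo]

theorem posComp_finitely_many_classes_general (C : Type) [Fintype C] (n : ℕ) :
    ∃ S : Finset (Fin n → Term C), ∀ t : Fin n → Term C, ∃ s ∈ S, PosCompF t s := by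
  classical
  refine ⟨Fintype.piFinset fun _ => boundedTerms (2 * n), fun t => ?_⟩
  obtain ⟨f, hinj, hmaps⟩ := exists_injOn_mapsTo_range_sdiff (tupleNames t)
  have hfresh : Set.MapsTo f ↑(tupleNames t) (↑(tupleNames t))ᶜ := fun v hv =>
    (Finset.mem_sdiff.mp (hmaps hv)).2
  have hbound : Set.MapsTo f ↑(tupleNames t) ↑(Finset.range (2 * n)) := fun v hv =>
    Finset.range_subset_range.mpr (by have := card_tupleNames_le t; omega)
      (Finset.mem_sdiff.mp (hmaps hv)).1
  refine ⟨Term.rename f ∘ t, ?_, posCompF_rename hinj hfresh⟩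
  exact Fintype.mem_piFinset.mpr fun i =>
    (t i).rename_mem_boundedTerms (names_subset_tupleNames t i) hbound

/-- For any finite set of constants and any arity `n`, there are only finitely many
equivalence classes of `n`-tuples of terms under position comparability `∼`:
some finite set of tuples meets every `∼`-class. -/
theorem posComp_finitely_many_classes (C : Type) [Fintype C] [DecidableEq C] (n : ℕ) :
    ∃ S : Finset (Fin n → Term C), ∀ t : Fin n → Term C, ∃ s ∈ S, PosCompF t s :=
  posComp_finitely_many_classes_general C n

end Paper
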